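/- arXiv:1201.0814 — 3 statements merged into one kernel-verified Lean document; each statement's English description precedes it below -/
import Mathlib

section
/- Suppose the configuration (J, K, D₁, D₂) is semi-slant with angle θ and θ ∈ [0, π/2). Then the dimension of K is even. -/
/-!
An injective skew-adjoint endomorphism of an `n`-dimensional real inner product space has
nonzero determinant `det f = det fᵀ = (-1)ⁿ det f`, so `n` is even. Compressing `J` to a
subspace `U` (project `J x` back onto `U`) keeps it skew-adjoint. On `D₁` the compression is
injective because `D₁` is `J`-invariant; on `D₂` a nonzero kernel vector `X` would have
`J X ⟂ D₂`, i.e. slant angle `π/2`. Hence `D₁` and `D₂` are even-dimensional, and so is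
`K = D₁ ⊕ D₂`.
-/
open Module LinearMap InnerProductGeometry
open scoped RealInnerProductSpace

section SkewAdjoint

variable {E : Type*} [NormedAddCommGroup E] [InnerProductSpace ℝ E]

theorem LinearMap.det_adjoint_of_real [FiniteDimensional ℝ E] (f : E →ₗ[ℝ] E) :
    (adjoint f).det = f.det := by
  let b := stdOrthonormalBasis ℝ E
  rw [← det_toMatrix b.toBasis, ← det_toMatrix b.toBasis, toMatrix_adjoint,
    Matrix.det_conjTranspose, star_trivial]

theorem even_finrank_of_skew_of_injective [FiniteDimensional ℝ E] {f : E →ₗ[ℝ] E}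
    (hskew : ∀ x y, ⟪f x, y⟫ = -⟪x, f y⟫) (hf : Function.Injective f) :
    Even (finrank ℝ E) := by
  have hadj : adjoint f = -f :=
    ((eq_adjoint_iff (-f) f).mpr fun x y ↦ by
      rw [LinearMap.neg_apply, inner_neg_left, hskew, neg_neg]).symm
  have hdet : f.det ≠ 0 := by
    rw [Ne, det_eq_zero_iff_ker_ne_bot, not_not, ker_eq_bot]; exact hf
  have hsign : (-1 : ℝ) ^ finrank ℝ E = 1 := by
    refine mul_right_cancel₀ hdet ?_
    rw [one_mul, ← det_smul, neg_one_smul, ← hadj, det_adjoint_of_real]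
  exact (neg_one_pow_eq_one_iff_even (by norm_num)).mp hsign

theorem inner_map_left_eq_neg_inner_map_right {J : E →ₗ[ℝ] E} (hJiso : ∀ v, ‖J v‖ = ‖v‖)
    (hJ2 : ∀ v, J (J v) = -v) (v w : E) : ⟪J v, w⟫ = -⟪v, J w⟫ := by
  have h := LinearIsometry.inner_map_map ⟨J, hJiso⟩ v (J w)
  simp only [LinearIsometry.coe_mk, hJ2, inner_neg_right] at h
  linarith

namespace Submodule

variable (U : Submodule ℝ E) [U.HasOrthogonalProjection]

noncomputable def compression (f : E →ₗ[ℝ] E) : U →ₗ[ℝ] U :=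
  U.orthogonalProjectionOnto.toLinearMap ∘ₗ f ∘ₗ U.subtype

variable {U}

@[simp]
theorem compression_apply (f : E →ₗ[ℝ] E) (x : U) :
    U.compression f x = U.orthogonalProjectionOnto (f x) :=
  rfl

theorem inner_compression_left (f : E →ₗ[ℝ] E) (x y : U) :
    ⟪U.compression f x, y⟫ = ⟪f x, y⟫ :=
  inner_orthogonalProjectionOnto_eq_of_mem_right y (f x)

theorem inner_compression_right (f : E →ₗ[ℝ] E) (x y : U) :
    ⟪x, U.compression f y⟫ = ⟪(x : E), f y⟫ :=
  inner_orthogonalProjectionOnto_eq_of_mem_left x (f y)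

theorem compression_injective_iff (f : E →ₗ[ℝ] E) :
    Function.Injective (U.compression f) ↔ ∀ x ∈ U, f x ∈ Uᗮ → x = 0 := by
  simp only [← ker_eq_bot, eq_bot_iff, SetLike.le_def, mem_ker, compression_apply,
    orthogonalProjectionOnto_eq_zero_iff, mem_bot, Subtype.forall, mk_eq_zero]

theorem even_finrank_of_compression_injective [FiniteDimensional ℝ U] {f : E →ₗ[ℝ] E}
    (hskew : ∀ x y, ⟪f x, y⟫ = -⟪x, f y⟫) (hinj : Function.Injective (U.compression f)) :
    Even (finrank ℝ U) :=
  even_finrank_of_skew_of_injective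
    (fun x y ↦ by rw [inner_compression_left, inner_compression_right, hskew]) hinj

end Submodule

end SkewAdjoint

/-- If the configuration `(J, K, D₁, D₂)` is semi-slant with angle
`θ ∈ [0, π/2)`, then the dimension of `K` is even. -/
theorem stmt_7 {V : Type*} [NormedAddCommGroup V] [InnerProductSpace ℝ V]
    [FiniteDimensional ℝ V]
    (J : V →ₗ[ℝ] V) (hJiso : ∀ v : V, ‖J v‖ = ‖v‖) (hJ2 : ∀ v : V, J (J v) = -v)
    (K : Submodule ℝ V)
    (D₁ D₂ : Submodule ℝ V) (hD₁K : D₁ ≤ K) (hJD₁ : D₁.map J = D₁)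
    (hD₂ : D₂ = D₁ᗮ ⊓ K)
    (θ : ℝ) (hθ : θ ∈ Set.Ico 0 (Real.pi / 2))
    (hslant : ∀ X : V, X ∈ D₂ → X ≠ 0 →
      InnerProductGeometry.angle (J X) (D₂.orthogonalProjectionOnto (J X) : V) = θ) :
    Even (Module.finrank ℝ K) := by
  have hskew := inner_map_left_eq_neg_inner_map_right hJiso hJ2
  have hD₁even : Even (finrank ℝ D₁) := by
    refine D₁.even_finrank_of_compression_injective hskew ?_
    rw [Submodule.compression_injective_iff]
    intro x hx hJx
    have hJx₁ : J x ∈ D₁ := hJD₁ ▸ Submodule.mem_map_of_mem hx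
    rw [← norm_eq_zero, ← hJiso, norm_eq_zero]
    exact Submodule.disjoint_def.mp (Submodule.orthogonal_disjoint D₁) _ hJx₁ hJx
  have hD₂even : Even (finrank ℝ D₂) := by
    refine D₂.even_finrank_of_compression_injective hskew ?_
    rw [Submodule.compression_injective_iff]
    intro x hx hJx
    by_contra hx0
    have hangle := hslant x hx hx0
    rw [Submodule.orthogonalProjectionOnto_eq_zero_iff.mpr hJx, Submodule.coe_zero,
      angle_zero_right] at hangle
    exact hθ.2.ne' hangle
  rw [← Submodule.finrank_add_inf_finrank_orthogonal hD₁K, ← hD₂]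
  exact hD₁even.add hD₂even
end

section
/- Fix α ∈ (0, π/2) and let F : ℝ⁶ → ℝ² be the linear map F(x₁,…,x₆) = (x₃ sin α − x₅ cos α, x₆). Then: (i) F is surjective and ‖F(v)‖ = ‖v‖ for every v in the orthogonal complement of ker F (so F is a Riemannian submersion of Euclidean spaces); (ii) ker F is the orthogonal direct sum of D₁ = span{e₁, e₂} and D₂ = span{e₄, cos α · e₃ + sin α · e₅}; (iii) J(D₁) = D₁; (iv) for every nonzero X ∈ D₂, the angle between JX and the orthogonal projection of JX onto D₂ equals α. Hence F is a semi-slant submersion with semi-slant angle α. -/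
/-!
In the orthonormal basis `e₁, e₂, e₄, u = cos α e₃ + sin α e₅, n = sin α e₃ - cos α e₅, e₆` of
`ℝ⁶` the map reads `F x = (⟪n, x⟫, ⟪e₆, x⟫)`. Hence `F` is onto and isometric on `(ker F)ᗮ`
(which is spanned by `n, e₆`), and `ker F` is the 4-dimensional span of `e₁, e₂, e₄, u`.
On `D₂ = span {e₄, u}` the compression `P ∘ J` of `J` is `cos α` times a quarter turn
(`⟪e₄, J u⟫ = cos α = -⟪u, J e₄⟫`, `⟪x, J x⟫ = 0`), so `‖P (J X)‖ = cos α ‖J X‖`; as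
`⟪J X, P (J X)⟫ = ‖P (J X)‖²`, the angle between `J X` and `P (J X)` is `arccos (cos α) = α`.
-/

open Module InnerProductGeometry
open scoped RealInnerProductSpace

theorem InnerProductGeometry.angle_self_starProjection {E : Type*} [NormedAddCommGroup E]
    [InnerProductSpace ℝ E] (K : Submodule ℝ E) [K.HasOrthogonalProjection] (v : E) :
    angle v (K.starProjection v) = Real.arccos (‖K.starProjection v‖ / ‖v‖) := by
  set p := K.starProjection v
  rcases eq_or_ne p 0 with hp | hp
  · simp [hp]
  have hvp : ⟪v, p⟫ = ‖p‖ ^ 2 := calc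
    ⟪v, p⟫ = ⟪v, K.starProjection p⟫ := by
      rw [K.starProjection_eq_self_iff.2 (K.starProjection_apply_mem v)]
    _ = ‖p‖ ^ 2 := by rw [← K.inner_starProjection_left_eq_right, real_inner_self_eq_norm_sq]
  rw [angle, hvp, sq, div_mul_eq_div_div_swap, mul_div_cancel_right₀ _ (norm_ne_zero_iff.2 hp)]

section OrthonormalCoordinates

variable {E ι : Type*} [NormedAddCommGroup E] [InnerProductSpace ℝ E] [Fintype ι]
  {b : ι → E} {F : E →ₗ[ℝ] EuclideanSpace ℝ ι}

theorem Orthonormal.norm_sum_smul (hb : Orthonormal ℝ b) (c : EuclideanSpace ℝ ι) :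
    ‖∑ i, c i • b i‖ = ‖c‖ := by
  rw [← sq_eq_sq₀ (norm_nonneg _) (norm_nonneg _), ← real_inner_self_eq_norm_sq,
    hb.inner_sum, EuclideanSpace.norm_sq_eq]
  simp [sq]

theorem Orthonormal.apply_sum_smul_of_apply_eq_inner (hb : Orthonormal ℝ b)
    (hF : ∀ x i, F x i = ⟪b i, x⟫) (c : EuclideanSpace ℝ ι) :
    F (∑ i, c i • b i) = c := by
  ext i
  rw [hF, hb.inner_right_fintype]

theorem Orthonormal.surjective_of_apply_eq_inner (hb : Orthonormal ℝ b)
    (hF : ∀ x i, F x i = ⟪b i, x⟫) : Function.Surjective F :=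
  fun c => ⟨_, hb.apply_sum_smul_of_apply_eq_inner hF c⟩

theorem Orthonormal.eq_sum_of_mem_orthogonal_ker (hb : Orthonormal ℝ b)
    (hF : ∀ x i, F x i = ⟪b i, x⟫) {v : E} (hv : v ∈ (LinearMap.ker F)ᗮ) :
    v = ∑ i, F v i • b i := by
  have hsub : v - ∑ i, F v i • b i ∈ LinearMap.ker F := by
    rw [LinearMap.mem_ker, map_sub, hb.apply_sum_smul_of_apply_eq_inner hF, sub_self]
  have hsum : ∑ i, F v i • b i ∈ (LinearMap.ker F)ᗮ := by
    refine Submodule.sum_mem _ fun i _ => Submodule.smul_mem _ _ ?_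
    intro x hx
    rw [real_inner_comm, ← hF, LinearMap.mem_ker.1 hx, PiLp.zero_apply]
  rw [← sub_eq_zero]
  exact (Submodule.mem_bot ℝ).1 <| (LinearMap.ker F).inf_orthogonal_eq_bot ▸
    ⟨hsub, Submodule.sub_mem _ hv hsum⟩

theorem Orthonormal.norm_apply_of_mem_orthogonal_ker (hb : Orthonormal ℝ b)
    (hF : ∀ x i, F x i = ⟪b i, x⟫) {v : E} (hv : v ∈ (LinearMap.ker F)ᗮ) :
    ‖F v‖ = ‖v‖ := by
  conv_rhs => rw [hb.eq_sum_of_mem_orthogonal_ker hF hv]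
  rw [hb.norm_sum_smul]

end OrthonormalCoordinates

section OrthonormalPair

variable {E : Type*} [NormedAddCommGroup E] [InnerProductSpace ℝ E] {v w : E}

theorem Orthonormal.norm_smul_add_smul (hvw : Orthonormal ℝ ![v, w]) (a b : ℝ) :
    ‖a • v + b • w‖ = √(a ^ 2 + b ^ 2) := by
  simpa [Fin.sum_univ_two, EuclideanSpace.norm_eq] using hvw.norm_sum_smul !₂[a, b]

theorem Orthonormal.starProjection_span_pair [(Submodule.span ℝ {v, w}).HasOrthogonalProjection]
    (hvw : Orthonormal ℝ ![v, w]) (x : E) :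
    (Submodule.span ℝ {v, w}).starProjection x = ⟪v, x⟫ • v + ⟪w, x⟫ • w := by
  have hvw' : ⟪v, w⟫ = 0 := by simpa using hvw.2 (show (0 : Fin 2) ≠ 1 by decide)
  have hv : ‖v‖ = 1 := by simpa using hvw.1 0
  have hw : ‖w‖ = 1 := by simpa using hvw.1 1
  refine Submodule.eq_starProjection_of_mem_of_inner_eq_zero ?_ fun y hy => ?_
  · exact Submodule.add_mem _ (Submodule.smul_mem _ _ (Submodule.subset_span (by simp)))
      (Submodule.smul_mem _ _ (Submodule.subset_span (by simp)))
  · obtain ⟨a, b, rfl⟩ := Submodule.mem_span_pair.1 hy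
    simp only [inner_sub_left, inner_add_left, inner_add_right, real_inner_smul_left,
      real_inner_smul_right, real_inner_self_eq_norm_sq, hv, hw, hvw', real_inner_comm v w,
      real_inner_comm x]
    ring

theorem Orthonormal.norm_starProjection_span_pair_apply
    [(Submodule.span ℝ {v, w}).HasOrthogonalProjection] (hvw : Orthonormal ℝ ![v, w])
    {T : E →ₗ[ℝ] E} {c : ℝ} (hvTv : ⟪v, T v⟫ = 0) (hwTw : ⟪w, T w⟫ = 0) (hvTw : ⟪v, T w⟫ = c)
    (hwTv : ⟪w, T v⟫ = -c) {x : E} (hx : x ∈ Submodule.span ℝ {v, w}) :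
    ‖(Submodule.span ℝ {v, w}).starProjection (T x)‖ = |c| * ‖x‖ := by
  obtain ⟨a, b, rfl⟩ := Submodule.mem_span_pair.1 hx
  rw [hvw.starProjection_span_pair, hvw.norm_smul_add_smul, hvw.norm_smul_add_smul]
  simp only [map_add, map_smul, inner_add_right, real_inner_smul_right, hvTv, hwTw, hvTw, hwTv]
  rw [← Real.sqrt_sq_eq_abs, ← Real.sqrt_mul (sq_nonneg c)]
  ring_nf

end OrthonormalPair

namespace SemiSlantR6

-- `𝐞 k` is the paper's `e_{k+1}`: coordinates are 0-indexed.
local notation "𝐞" k:max => EuclideanSpace.single (k : Fin 6) (1 : ℝ)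

noncomputable def slantVec (α : ℝ) : EuclideanSpace ℝ (Fin 6) :=
  Real.cos α • 𝐞 2 + Real.sin α • 𝐞 4

noncomputable def horizontalVec (α : ℝ) : EuclideanSpace ℝ (Fin 6) :=
  Real.sin α • 𝐞 2 - Real.cos α • 𝐞 4

abbrev IsStdComplexStructure (J : EuclideanSpace ℝ (Fin 6) →ₗ[ℝ] EuclideanSpace ℝ (Fin 6)) :
    Prop :=
  ∀ x k, J x k = if k.val % 2 = 0 then -(x (k + 1)) else x (k - 1)

theorem norm_slantVec (α : ℝ) : ‖slantVec α‖ = 1 := by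
  simp [EuclideanSpace.norm_eq, Fin.sum_univ_six, slantVec]

theorem norm_horizontalVec (α : ℝ) : ‖horizontalVec α‖ = 1 := by
  simp [EuclideanSpace.norm_eq, Fin.sum_univ_six, horizontalVec]

theorem orthonormal_horizontal (α : ℝ) : Orthonormal ℝ ![horizontalVec α, 𝐞 5] := by
  rw [orthonormal_iff_ite]
  intro i j
  fin_cases i <;> fin_cases j <;> simp [norm_horizontalVec] <;>
    simp [horizontalVec, inner_sub_left, inner_sub_right, real_inner_smul_left,
      EuclideanSpace.inner_single_left]

theorem orthonormal_vertical (α : ℝ) : Orthonormal ℝ ![𝐞 0, 𝐞 1, 𝐞 3, slantVec α] := by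
  rw [orthonormal_iff_ite]
  intro i j
  fin_cases i <;> fin_cases j <;> simp [norm_slantVec] <;>
    simp [slantVec, inner_add_left, inner_add_right, real_inner_smul_left,
      EuclideanSpace.inner_single_left]

theorem isOrtho_span_vertical (α : ℝ) :
    Submodule.span ℝ {𝐞 0, 𝐞 1} ⟂ Submodule.span ℝ {𝐞 3, slantVec α} := by
  rw [Submodule.isOrtho_span]
  simp [slantVec, inner_add_right, real_inner_smul_right, EuclideanSpace.inner_single_left]

section Submersion

variable {α : ℝ} {F : EuclideanSpace ℝ (Fin 6) →ₗ[ℝ] EuclideanSpace ℝ (Fin 2)}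

theorem apply_eq_inner_horizontal
    (hF : ∀ x, F x 0 = x 2 * Real.sin α - x 4 * Real.cos α ∧ F x 1 = x 5) (x) (i : Fin 2) :
    F x i = ⟪![horizontalVec α, 𝐞 5] i, x⟫ := by
  fin_cases i
  · simp [(hF x).1, horizontalVec, inner_sub_left, real_inner_smul_left,
      EuclideanSpace.inner_single_left]
    ring
  · simp [(hF x).2, EuclideanSpace.inner_single_left]

theorem ker_eq_sup (hF : ∀ x, F x 0 = x 2 * Real.sin α - x 4 * Real.cos α ∧ F x 1 = x 5) :
    LinearMap.ker F =
      Submodule.span ℝ {𝐞 0, 𝐞 1} ⊔ Submodule.span ℝ {𝐞 3, slantVec α} := by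
  have hsup : Submodule.span ℝ {𝐞 0, 𝐞 1} ⊔ Submodule.span ℝ {𝐞 3, slantVec α} =
      Submodule.span ℝ (Set.range ![𝐞 0, 𝐞 1, 𝐞 3, slantVec α]) := by
    rw [← Submodule.span_union, Matrix.range_cons, Matrix.range_cons, Matrix.range_cons,
      Matrix.range_cons_empty]
    congr 1
    ext
    simp only [Set.mem_union, Set.mem_insert_iff, Set.mem_singleton_iff]
    tauto
  have hle : Submodule.span ℝ (Set.range ![𝐞 0, 𝐞 1, 𝐞 3, slantVec α]) ≤ LinearMap.ker F := by
    rw [Submodule.span_le]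
    rintro _ ⟨j, rfl⟩
    ext i
    rw [apply_eq_inner_horizontal hF]
    fin_cases i <;> fin_cases j <;>
      simp [slantVec, horizontalVec, inner_add_right, inner_sub_left, real_inner_smul_left,
        real_inner_smul_right, EuclideanSpace.inner_single_left, mul_comm]
  have hsurj : Function.Surjective F :=
    (orthonormal_horizontal α).surjective_of_apply_eq_inner (apply_eq_inner_horizontal hF)
  have hker : finrank ℝ (LinearMap.ker F) = 4 := by
    have := LinearMap.finrank_range_add_finrank_ker F
    rw [LinearMap.range_eq_top.2 hsurj, finrank_top, finrank_euclideanSpace_fin,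
      finrank_euclideanSpace_fin] at this
    omega
  rw [hsup]
  refine (Submodule.eq_of_le_of_finrank_eq hle ?_).symm
  rw [hker, finrank_span_eq_card (orthonormal_vertical α).linearIndependent, Fintype.card_fin]

end Submersion

namespace IsStdComplexStructure

variable {J : EuclideanSpace ℝ (Fin 6) →ₗ[ℝ] EuclideanSpace ℝ (Fin 6)}

theorem norm_apply (hJ : IsStdComplexStructure J) (x : EuclideanSpace ℝ (Fin 6)) :
    ‖J x‖ = ‖x‖ := by
  simp [EuclideanSpace.norm_eq, Fin.sum_univ_six, hJ]
  ring_nf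

theorem inner_apply_self (hJ : IsStdComplexStructure J) (x : EuclideanSpace ℝ (Fin 6)) :
    ⟪x, J x⟫ = 0 := by
  simp [PiLp.inner_apply, Fin.sum_univ_six, hJ]
  ring

theorem apply_single_zero (hJ : IsStdComplexStructure J) : J (𝐞 0) = 𝐞 1 := by
  ext k
  fin_cases k <;> simp [hJ]

theorem apply_single_one (hJ : IsStdComplexStructure J) : J (𝐞 1) = -𝐞 0 := by
  ext k
  fin_cases k <;> simp [hJ]

theorem inner_single_three_apply_slantVec (hJ : IsStdComplexStructure J) (α : ℝ) :
    ⟪𝐞 3, J (slantVec α)⟫ = Real.cos α := by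
  simp [EuclideanSpace.inner_single_left, hJ, slantVec]

theorem inner_slantVec_apply_single_three (hJ : IsStdComplexStructure J) (α : ℝ) :
    ⟪slantVec α, J (𝐞 3)⟫ = -Real.cos α := by
  simp [slantVec, inner_add_left, real_inner_smul_left, EuclideanSpace.inner_single_left, hJ]

theorem map_span_single_zero_one (hJ : IsStdComplexStructure J) :
    (Submodule.span ℝ {𝐞 0, 𝐞 1}).map J = Submodule.span ℝ {𝐞 0, 𝐞 1} := by
  rw [Submodule.map_span, Set.image_pair, hJ.apply_single_zero, hJ.apply_single_one,
    Set.pair_comm, Submodule.span_insert, Submodule.span_insert, ← Set.neg_singleton,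
    Submodule.span_neg]

theorem angle_apply_starProjection (hJ : IsStdComplexStructure J) {α : ℝ}
    (hα : α ∈ Set.Ioo 0 (Real.pi / 2)) {X : EuclideanSpace ℝ (Fin 6)}
    (hX : X ∈ Submodule.span ℝ {𝐞 3, slantVec α}) (hX0 : X ≠ 0) :
    angle (J X) ((Submodule.span ℝ {𝐞 3, slantVec α}).starProjection (J X)) = α := by
  have hcos : 0 < Real.cos α := Real.cos_pos_of_mem_Ioo ⟨by linarith [hα.1, Real.pi_pos], hα.2⟩
  have hpair : Orthonormal ℝ ![𝐞 3, slantVec α] := by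
    convert (orthonormal_vertical α).comp ![2, 3] (by decide) using 1
    ext i : 1
    fin_cases i <;> rfl
  rw [angle_self_starProjection, hpair.norm_starProjection_span_pair_apply (hJ.inner_apply_self _)
    (hJ.inner_apply_self _) (hJ.inner_single_three_apply_slantVec α)
    (hJ.inner_slantVec_apply_single_three α) hX, hJ.norm_apply, abs_of_pos hcos,
    mul_div_cancel_right₀ _ (norm_ne_zero_iff.2 hX0)]
  exact Real.arccos_cos hα.1.le (by linarith [hα.2, Real.pi_pos])

end IsStdComplexStructure

end SemiSlantR6

/-- Example 3.5: For `α ∈ (0, π/2)`, the map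
`F : ℝ⁶ → ℝ², F(x) = (x₃ sin α − x₅ cos α, x₆)` is a Riemannian submersion which is
semi-slant with semi-slant angle `α`, where `J` is the standard complex structure
(`J e_{2i-1} = e_{2i}`, `J e_{2i} = -e_{2i-1}`, written here in 0-indexed coordinates),
`D₁ = span{e₁, e₂}` and `D₂ = span{e₄, cos α · e₃ + sin α · e₅}` (1-indexed). -/
theorem stmt_11 (α : ℝ) (hα : α ∈ Set.Ioo 0 (Real.pi / 2))
    (J : EuclideanSpace ℝ (Fin 6) →ₗ[ℝ] EuclideanSpace ℝ (Fin 6))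
    (hJ : ∀ (x : EuclideanSpace ℝ (Fin 6)) (k : Fin 6),
      J x k = if k.val % 2 = 0 then -(x (k + 1)) else x (k - 1))
    (F : EuclideanSpace ℝ (Fin 6) →ₗ[ℝ] EuclideanSpace ℝ (Fin 2))
    (hF : ∀ x : EuclideanSpace ℝ (Fin 6),
      F x 0 = x 2 * Real.sin α - x 4 * Real.cos α ∧ F x 1 = x 5)
    (D₁ D₂ : Submodule ℝ (EuclideanSpace ℝ (Fin 6)))
    (hD₁ : D₁ = Submodule.span ℝ
      {EuclideanSpace.single 0 (1 : ℝ), EuclideanSpace.single 1 (1 : ℝ)})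
    (hD₂ : D₂ = Submodule.span ℝ
      {EuclideanSpace.single 3 (1 : ℝ),
       Real.cos α • EuclideanSpace.single 2 (1 : ℝ)
         + Real.sin α • EuclideanSpace.single 4 (1 : ℝ)}) :
    Function.Surjective F ∧
    (∀ v ∈ (LinearMap.ker F)ᗮ, ‖F v‖ = ‖v‖) ∧
    LinearMap.ker F = D₁ ⊔ D₂ ∧
    (∀ x ∈ D₁, ∀ y ∈ D₂, inner ℝ x y = (0 : ℝ)) ∧
    D₁.map J = D₁ ∧
    (∀ X ∈ D₂, X ≠ 0 →
      InnerProductGeometry.angle (J X)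
        (Submodule.orthogonalProjection D₂ (J X) : EuclideanSpace ℝ (Fin 6)) = α) := by
  open SemiSlantR6 in
  subst hD₁ hD₂
  have hb := orthonormal_horizontal α
  have hFb := apply_eq_inner_horizontal hF
  exact ⟨hb.surjective_of_apply_eq_inner hFb,
    fun v hv => hb.norm_apply_of_mem_orthogonal_ker hFb hv,
    ker_eq_sup hF,
    Submodule.isOrtho_iff_inner_eq.1 (isOrtho_span_vertical α),
    IsStdComplexStructure.map_span_single_zero_one hJ,
    fun X hX hX0 => IsStdComplexStructure.angle_apply_starProjection hJ hα hX hX0⟩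
end

section
/- Suppose the configuration (J, K, D₁, D₂) is semi-slant with angle θ ∈ (0, π/2]. Then B(Kᗮ) = D₂, i.e. the image of the orthogonal complement of K under Z ↦ proj_K(JZ) is exactly D₂. -/
open Submodule InnerProductGeometry RealInnerProductSpace

/-!
Write `P` for the orthogonal projection onto `K`. Since `J` is skew-adjoint and preserves `D₁ ⊆ K`,
`P ∘ J` maps `D₁ᗮ ⊇ Kᗮ` into `D₂`, and on `D₂` it is a skew-adjoint operator which, by the slant
condition, scales every norm by `cos θ`; hence `(P ∘ J)² = -cos² θ` on `D₂`. For `v ∈ D₂` the vector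
`Z = J v - P (J v)` lies in `Kᗮ` and `P (J Z) = -v + cos² θ • v = -sin² θ • v`, which is invertible
because `θ ∈ (0, π/2]`.
-/

section

variable {V : Type*} [NormedAddCommGroup V] [InnerProductSpace ℝ V]

theorem LinearMap.inner_map_left_eq_neg_of_norm_map_of_map_map_eq_neg (J : V →ₗ[ℝ] V)
    (hJiso : ∀ v, ‖J v‖ = ‖v‖) (hJ2 : ∀ v, J (J v) = -v) (u v : V) :
    ⟪J u, v⟫ = -⟪u, J v⟫ := by
  have h := (LinearMap.norm_map_iff_inner_map_map J).mp hJiso u (J v)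
  rw [hJ2, inner_neg_right] at h
  rw [← h, neg_neg]

theorem Submodule.norm_starProjection_eq_cos_angle_mul_norm (K : Submodule ℝ V)
    [K.HasOrthogonalProjection] (v : V) :
    ‖K.starProjection v‖ = Real.cos (angle v (K.starProjection v)) * ‖v‖ := by
  set p := K.starProjection v
  rcases eq_or_ne p 0 with hp | hp
  · rw [hp, angle_zero_right, Real.cos_pi_div_two, norm_zero, zero_mul]
  have hinner : ⟪v, p⟫ = ‖p‖ * ‖p‖ := by
    rw [← real_inner_self_eq_norm_mul_norm, ← sub_eq_zero, ← inner_sub_left]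
    exact K.starProjection_inner_eq_zero v p (K.starProjection_apply_mem v)
  have h := cos_angle_mul_norm_mul_norm v p
  rw [hinner, ← mul_assoc] at h
  exact (mul_right_cancel₀ (norm_ne_zero_iff.mpr hp) h).symm

theorem Submodule.starProjection_eq_of_le_of_starProjection_mem {U K : Submodule ℝ V}
    [U.HasOrthogonalProjection] [K.HasOrthogonalProjection] (hUK : U ≤ K) {v : V}
    (hv : K.starProjection v ∈ U) : U.starProjection v = K.starProjection v := by
  rw [← starProjection_comp_starProjection_of_le hUK, ContinuousLinearMap.comp_apply,
    starProjection_eq_self_iff.mpr hv]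

theorem apply_apply_eq_neg_sq_smul_of_norm_apply_eq {T : V → V} {D : Set V} {c : ℝ}
    (hmaps : Set.MapsTo T D D) (hskew : ∀ x ∈ D, ∀ y ∈ D, ⟪T x, y⟫ = -⟪x, T y⟫)
    (hnorm : ∀ x ∈ D, ‖T x‖ = c * ‖x‖) {x : V} (hx : x ∈ D) :
    T (T x) = -c ^ 2 • x := by
  have hTTx : ⟪T (T x), x⟫ = -‖T x‖ ^ 2 := by
    rw [hskew _ (hmaps hx) x hx, real_inner_self_eq_norm_sq]
  -- the square expands to `c⁴‖x‖² - 2c²‖T x‖² + c⁴‖x‖²`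
  have hsq : ‖T (T x) + c ^ 2 • x‖ ^ 2 = 0 := by
    rw [norm_add_sq_real, real_inner_smul_right, hTTx, norm_smul, Real.norm_eq_abs,
      abs_of_nonneg (sq_nonneg c), hnorm _ (hmaps hx), hnorm x hx]
    ring
  rw [neg_smul, ← add_eq_zero_iff_eq_neg]
  exact norm_eq_zero.mp (pow_eq_zero_iff two_ne_zero |>.mp hsq)

variable {J : V →ₗ[ℝ] V} {K : Submodule ℝ V} [K.HasOrthogonalProjection]

theorem inner_starProjection_map_eq_neg (hJ : ∀ u v, ⟪J u, v⟫ = -⟪u, J v⟫) {x y : V}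
    (hx : x ∈ K) (hy : y ∈ K) :
    ⟪K.starProjection (J x), y⟫ = -⟪x, K.starProjection (J y)⟫ := by
  rw [inner_starProjection_left_eq_right, starProjection_eq_self_iff.mpr hy, hJ,
    ← inner_starProjection_left_eq_right, starProjection_eq_self_iff.mpr hx]

theorem starProjection_map_mem_orthogonal_inf (hJ : ∀ u v, ⟪J u, v⟫ = -⟪u, J v⟫)
    {D₁ : Submodule ℝ V} (hD₁K : D₁ ≤ K) (hJD₁ : ∀ x ∈ D₁, J x ∈ D₁) {w : V} (hw : w ∈ D₁ᗮ) :
    K.starProjection (J w) ∈ D₁ᗮ ⊓ K := by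
  refine ⟨fun x hx => ?_, K.starProjection_apply_mem _⟩
  rw [real_inner_comm, inner_starProjection_left_eq_right, starProjection_eq_self_iff.mpr (hD₁K hx),
    hJ, real_inner_comm, hw _ (hJD₁ x hx), neg_zero]

theorem exists_mem_orthogonal_starProjection_map_eq (hJ2 : ∀ v, J (J v) = -v) {c : ℝ}
    (hc : c ^ 2 ≠ 1) {v : V} (hv : v ∈ K)
    (hvv : K.starProjection (J (K.starProjection (J v))) = -c ^ 2 • v) :
    ∃ Z ∈ Kᗮ, K.starProjection (J Z) = v := by
  refine ⟨(c ^ 2 - 1)⁻¹ • (J v - K.starProjection (J v)),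
    Kᗮ.smul_mem _ (K.sub_starProjection_mem_orthogonal _), ?_⟩
  rw [map_smul, map_sub, map_smul, map_sub, hJ2, map_neg, starProjection_eq_self_iff.mpr hv, hvv,
    ← neg_one_smul ℝ v, ← sub_smul, smul_smul]
  convert one_smul ℝ v using 2
  field_simp
  ring

end

theorem stmt_16_general {V : Type*} [NormedAddCommGroup V] [InnerProductSpace ℝ V]
    [FiniteDimensional ℝ V]
    (J : V →ₗ[ℝ] V) (hJiso : ∀ v : V, ‖J v‖ = ‖v‖) (hJ2 : ∀ v : V, J (J v) = -v)
    (K : Submodule ℝ V)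
    (B : Kᗮ → K)
    (hB : ∀ Z : Kᗮ, B Z = Submodule.orthogonalProjectionOnto K (J (Z : V)))
    (D₁ D₂ : Submodule ℝ V) (hD₁K : D₁ ≤ K) (hJD₁ : D₁.map J = D₁)
    (hD₂ : D₂ = D₁ᗮ ⊓ K)
    (θ : ℝ) (hθ : θ ∈ Set.Ioc 0 (Real.pi / 2))
    (hslant : ∀ X : V, X ∈ D₂ → X ≠ 0 →
      InnerProductGeometry.angle (J X) (Submodule.orthogonalProjectionOnto D₂ (J X) : V) = θ) :
    {v : V | ∃ Z : Kᗮ, (B Z : V) = v} = {v : V | v ∈ D₂} := by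
  have hJ := J.inner_map_left_eq_neg_of_norm_map_of_map_map_eq_neg hJiso hJ2
  have hJD₁' : ∀ x ∈ D₁, J x ∈ D₁ := fun x hx => hJD₁ ▸ mem_map_of_mem hx
  have hD₂K : D₂ ≤ K := hD₂ ▸ inf_le_right
  have hmaps : Set.MapsTo (fun X => K.starProjection (J X)) D₂ D₂ := fun X hX =>
    hD₂ ▸ starProjection_map_mem_orthogonal_inf hJ hD₁K hJD₁' (hD₂ ▸ hX).1
  have hnorm : ∀ X ∈ D₂, ‖K.starProjection (J X)‖ = Real.cos θ * ‖X‖ := by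
    intro X hX
    rcases eq_or_ne X 0 with rfl | hX0
    · simp
    rw [← starProjection_eq_of_le_of_starProjection_mem hD₂K (hmaps hX),
      norm_starProjection_eq_cos_angle_mul_norm, starProjection_apply, hslant X hX hX0, hJiso]
  have hcos : Real.cos θ ^ 2 ≠ 1 := by
    have hsin : 0 < Real.sin θ :=
      Real.sin_pos_of_pos_of_lt_pi hθ.1 (hθ.2.trans_lt (by linarith [Real.pi_pos]))
    nlinarith [Real.sin_sq_add_cos_sq θ]
  ext v
  simp only [Set.mem_ofPred_eq, hB, ← starProjection_apply]
  constructor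
  · rintro ⟨Z, rfl⟩
    exact hD₂ ▸ starProjection_map_mem_orthogonal_inf hJ hD₁K hJD₁' (orthogonal_le hD₁K Z.2)
  · intro hv
    obtain ⟨Z, hZ, hZv⟩ := exists_mem_orthogonal_starProjection_map_eq hJ2 hcos (hD₂K hv)
      (apply_apply_eq_neg_sq_smul_of_norm_apply_eq hmaps
        (fun x hx y hy => inner_starProjection_map_eq_neg hJ (hD₂K hx) (hD₂K hy)) hnorm hv)
    exact ⟨⟨Z, hZ⟩, hZv⟩

/-- If the configuration `(J, K, D₁, D₂)` is semi-slant with angle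
`θ ∈ (0, π/2]`, then `B(Kᗮ) = D₂`: the image of `Kᗮ` under `Z ↦ proj_K (J Z)` is
exactly `D₂`. -/
theorem stmt_16 {V : Type*} [NormedAddCommGroup V] [InnerProductSpace ℝ V]
    [FiniteDimensional ℝ V]
    (J : V →ₗ[ℝ] V) (hJiso : ∀ v : V, ‖J v‖ = ‖v‖) (hJ2 : ∀ v : V, J (J v) = -v)
    (K : Submodule ℝ V)
    (φ : K → K) (ω : K → Kᗮ) (B : Kᗮ → K)
    (hφ : ∀ X : K, φ X = Submodule.orthogonalProjectionOnto K (J (X : V)))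
    (hω : ∀ X : K, ω X = Submodule.orthogonalProjectionOnto Kᗮ (J (X : V)))
    (hB : ∀ Z : Kᗮ, B Z = Submodule.orthogonalProjectionOnto K (J (Z : V)))
    (D₁ D₂ : Submodule ℝ V) (hD₁K : D₁ ≤ K) (hJD₁ : D₁.map J = D₁)
    (hD₂ : D₂ = D₁ᗮ ⊓ K)
    (θ : ℝ) (hθ : θ ∈ Set.Ioc 0 (Real.pi / 2))
    (hslant : ∀ X : V, X ∈ D₂ → X ≠ 0 →
      InnerProductGeometry.angle (J X) (Submodule.orthogonalProjectionOnto D₂ (J X) : V) = θ) :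
    {v : V | ∃ Z : Kᗮ, (B Z : V) = v} = {v : V | v ∈ D₂} :=
  stmt_16_general J hJiso hJ2 K B hB D₁ D₂ hD₁K hJD₁ hD₂ θ hθ hslant
end
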